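/- arXiv:2103.05093 — 3 statements merged into one kernel-verified Lean document; each statement's English description precedes it below -/
import Mathlib

section
/- Let G₁, G₂, G₃ be groups, φᵢ : Gᵢ → ℤ^m surjective homomorphisms with sections sᵢ (φᵢ ∘ sᵢ = id), and φ : G₁ × G₂ × G₃ → ℤ^m defined by φ(g₁,g₂,g₃) = Σ φᵢ(gᵢ). Let T₁ = {(s₁(z), s₂(z)⁻¹, e) : z ∈ ℤ^m}, T₂ = {(e, s₂(z), s₃(z)⁻¹) : z ∈ ℤ^m}, T₃ = {(s₁(z)⁻¹, e, s₃(z)) : z ∈ ℤ^m}, and Uᵢ the image of ker(φᵢ) embedded in the i-th factor. Then the subgroup generated by U₁ ∪ U₂ ∪ U₃ ∪ T₁ ∪ T₂ ∪ T₃ equals ker(φ). -/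
/-- The subgroup generated by `U₁ ∪ U₂ ∪ U₃ ∪ T₁ ∪ T₂ ∪ T₃` equals `ker φ`. -/
theorem closure_eq_ker {G₁ G₂ G₃ : Type*} [Group G₁] [Group G₂] [Group G₃]
    (m : ℕ)
    (φ₁ : G₁ →* Multiplicative (Fin m → ℤ))
    (φ₂ : G₂ →* Multiplicative (Fin m → ℤ))
    (φ₃ : G₃ →* Multiplicative (Fin m → ℤ))
    (hφ₁ : Function.Surjective φ₁) (hφ₂ : Function.Surjective φ₂)
    (hφ₃ : Function.Surjective φ₃)
    (s₁ : Multiplicative (Fin m → ℤ) →* G₁)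
    (s₂ : Multiplicative (Fin m → ℤ) →* G₂)
    (s₃ : Multiplicative (Fin m → ℤ) →* G₃)
    (hs₁ : φ₁.comp s₁ = MonoidHom.id _)
    (hs₂ : φ₂.comp s₂ = MonoidHom.id _)
    (hs₃ : φ₃.comp s₃ = MonoidHom.id _)
    (φ : G₁ × G₂ × G₃ →* Multiplicative (Fin m → ℤ))
    (hφ : ∀ g₁ g₂ g₃, φ (g₁, g₂, g₃) = φ₁ g₁ * φ₂ g₂ * φ₃ g₃)
    (T₁ T₂ T₃ U₁ U₂ U₃ : Set (G₁ × G₂ × G₃))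
    (hT₁ : T₁ = {x | ∃ z, x = (s₁ z, (s₂ z)⁻¹, 1)})
    (hT₂ : T₂ = {x | ∃ z, x = (1, s₂ z, (s₃ z)⁻¹)})
    (hT₃ : T₃ = {x | ∃ z, x = ((s₁ z)⁻¹, 1, s₃ z)})
    (hU₁ : U₁ = {x | ∃ y ∈ φ₁.ker, x = (y, 1, 1)})
    (hU₂ : U₂ = {x | ∃ y ∈ φ₂.ker, x = (1, y, 1)})
    (hU₃ : U₃ = {x | ∃ y ∈ φ₃.ker, x = (1, 1, y)}) :
    Subgroup.closure (U₁ ∪ U₂ ∪ U₃ ∪ T₁ ∪ T₂ ∪ T₃) = φ.ker := by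
  have h1 : ∀ z, φ₁ (s₁ z) = z := fun z => DFunLike.congr_fun hs₁ z
  have h2 : ∀ z, φ₂ (s₂ z) = z := fun z => DFunLike.congr_fun hs₂ z
  have h3 : ∀ z, φ₃ (s₃ z) = z := fun z => DFunLike.congr_fun hs₃ z
  apply le_antisymm
  · rw [Subgroup.closure_le]
    rintro x (((((hx | hx) | hx) | hx) | hx) | hx)
    · rw [hU₁] at hx; obtain ⟨y, hy, rfl⟩ := hx
      simp [MonoidHom.mem_ker, hφ, MonoidHom.mem_ker.mp hy]
    · rw [hU₂] at hx; obtain ⟨y, hy, rfl⟩ := hx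
      simp [MonoidHom.mem_ker, hφ, MonoidHom.mem_ker.mp hy]
    · rw [hU₃] at hx; obtain ⟨y, hy, rfl⟩ := hx
      simp [MonoidHom.mem_ker, hφ, MonoidHom.mem_ker.mp hy]
    · rw [hT₁] at hx; obtain ⟨z, rfl⟩ := hx
      simp [MonoidHom.mem_ker, hφ, h1, h2]
    · rw [hT₂] at hx; obtain ⟨z, rfl⟩ := hx
      simp [MonoidHom.mem_ker, hφ, h2, h3]
    · rw [hT₃] at hx; obtain ⟨z, rfl⟩ := hx
      simp [MonoidHom.mem_ker, hφ, h1, h3, mul_comm]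
  · rintro ⟨g₁, g₂, g₃⟩ hx
    rw [MonoidHom.mem_ker, hφ] at hx
    set z₁ := φ₁ g₁ with hz₁
    set z₂ := φ₂ g₂ with hz₂
    set z₃ := φ₃ g₃ with hz₃
    have hz3 : s₃ z₃ = (s₃ (z₁ * z₂))⁻¹ := by
      have : z₃ = (z₁ * z₂)⁻¹ := by
        rw [eq_inv_iff_mul_eq_one, mul_comm]; exact hx
      rw [this, map_inv]
    have hdecomp : (g₁, g₂, g₃) =
        ((g₁ * (s₁ z₁)⁻¹, 1, 1) : G₁ × G₂ × G₃) * (1, g₂ * (s₂ z₂)⁻¹, 1) *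
        (1, 1, g₃ * (s₃ z₃)⁻¹) * (s₁ z₁, (s₂ z₁)⁻¹, 1) *
        (1, s₂ (z₁ * z₂), (s₃ (z₁ * z₂))⁻¹) := by
      rw [← hz3]
      ext <;> simp [map_mul] <;> group
    rw [hdecomp]
    have S := U₁ ∪ U₂ ∪ U₃ ∪ T₁ ∪ T₂ ∪ T₃
    refine mul_mem (mul_mem (mul_mem (mul_mem ?_ ?_) ?_) ?_) ?_ <;>
      apply Subgroup.subset_closure
    · left; left; left; left; left
      rw [hU₁]; exact ⟨_, by simp [MonoidHom.mem_ker, hz₁, h1], rfl⟩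
    · left; left; left; left; right
      rw [hU₂]; exact ⟨_, by simp [MonoidHom.mem_ker, hz₂, h2], rfl⟩
    · left; left; left; right
      rw [hU₃]; exact ⟨_, by simp [MonoidHom.mem_ker, hz₃, h3], rfl⟩
    · left; left; right
      rw [hT₁]; exact ⟨z₁, rfl⟩
    · left; right
      rw [hT₂]; exact ⟨z₁ * z₂, rfl⟩
end

section
/- In the setting of the generating-set lemma (three groups Gᵢ with split surjections φᵢ : Gᵢ → ℤ^m, φ = Σφᵢ, sections sᵢ, Tⱼ and Uᵢ as defined there), the subgroup H = ⟨U₁ ∪ U₂ ∪ T⟩ of G₁ × G₂ × G₃ projects isomorphically onto G₁ × G₂ under the projection to the first two coordinates. -/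
/-- The subgroup `H = ⟨U₁ ∪ U₂ ∪ T⟩` of `G₁ × G₂ × G₃` projects isomorphically
(bijectively) onto `G₁ × G₂` under the projection to the first two coordinates. -/
theorem closure_U1_U2_T_projects_iso {G₁ G₂ G₃ : Type*} [Group G₁] [Group G₂] [Group G₃]
    (m : ℕ)
    (φ₁ : G₁ →* Multiplicative (Fin m → ℤ))
    (φ₂ : G₂ →* Multiplicative (Fin m → ℤ))
    (φ₃ : G₃ →* Multiplicative (Fin m → ℤ))
    (hφ₁ : Function.Surjective φ₁) (hφ₂ : Function.Surjective φ₂)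
    (hφ₃ : Function.Surjective φ₃)
    (s₁ : Multiplicative (Fin m → ℤ) →* G₁)
    (s₂ : Multiplicative (Fin m → ℤ) →* G₂)
    (s₃ : Multiplicative (Fin m → ℤ) →* G₃)
    (hs₁ : φ₁.comp s₁ = MonoidHom.id _)
    (hs₂ : φ₂.comp s₂ = MonoidHom.id _)
    (hs₃ : φ₃.comp s₃ = MonoidHom.id _)
    (T₁ T₂ T₃ U₁ U₂ : Set (G₁ × G₂ × G₃))
    (hT₁ : T₁ = {x | ∃ z, x = (s₁ z, (s₂ z)⁻¹, 1)})
    (hT₂ : T₂ = {x | ∃ z, x = (1, s₂ z, (s₃ z)⁻¹)})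
    (hT₃ : T₃ = {x | ∃ z, x = ((s₁ z)⁻¹, 1, s₃ z)})
    (hU₁ : U₁ = {x | ∃ y ∈ φ₁.ker, x = (y, 1, 1)})
    (hU₂ : U₂ = {x | ∃ y ∈ φ₂.ker, x = (1, y, 1)}) :
    Function.Bijective
      (fun h : Subgroup.closure (U₁ ∪ U₂ ∪ (T₁ ∪ T₂ ∪ T₃)) =>
        (((h : G₁ × G₂ × G₃).1, (h : G₁ × G₂ × G₃).2.1) : G₁ × G₂)) := by
  have e₁ : ∀ z, φ₁ (s₁ z) = z := fun z => DFunLike.congr_fun hs₁ z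
  have e₂ : ∀ z, φ₂ (s₂ z) = z := fun z => DFunLike.congr_fun hs₂ z
  have e₃ : ∀ z, φ₃ (s₃ z) = z := fun z => DFunLike.congr_fun hs₃ z
  -- the homomorphism ψ(g₁,g₂,g₃) = φ₁g₁ * φ₂g₂ * φ₃g₃
  set ψ : G₁ × G₂ × G₃ →* Multiplicative (Fin m → ℤ) :=
    { toFun := fun x => φ₁ x.1 * φ₂ x.2.1 * φ₃ x.2.2
      map_one' := by simp
      map_mul' := by
        intro x y
        simp only [Prod.fst_mul, Prod.snd_mul, map_mul]
        ac_rfl } with hψ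
  -- the subgroup of elements whose third coordinate is in the range of s₃
  set p₃ : G₁ × G₂ × G₃ →* G₃ := (MonoidHom.snd G₂ G₃).comp (MonoidHom.snd G₁ (G₂ × G₃))
  have hle : Subgroup.closure (U₁ ∪ U₂ ∪ (T₁ ∪ T₂ ∪ T₃)) ≤ ψ.ker ⊓ Subgroup.comap p₃ s₃.range := by
    rw [Subgroup.closure_le]
    rintro x (((h | h) | ((h | h) | h)))
    · rw [hU₁] at h
      obtain ⟨y, hy, rfl⟩ := h
      refine ⟨?_, ⟨1, by simp [p₃]⟩⟩
      simp [ψ, MonoidHom.mem_ker.mp hy]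
    · rw [hU₂] at h
      obtain ⟨y, hy, rfl⟩ := h
      refine ⟨?_, ⟨1, by simp [p₃]⟩⟩
      simp [ψ, MonoidHom.mem_ker.mp hy]
    · rw [hT₁] at h
      obtain ⟨z, rfl⟩ := h
      refine ⟨?_, ⟨1, by simp [p₃]⟩⟩
      simp [ψ, e₁, e₂]
    · rw [hT₂] at h
      obtain ⟨z, rfl⟩ := h
      refine ⟨?_, ⟨z⁻¹, by simp [p₃]⟩⟩
      simp [ψ, e₂, e₃]
    · rw [hT₃] at h
      obtain ⟨z, rfl⟩ := h
      refine ⟨?_, ⟨z, by simp [p₃]⟩⟩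
      simp [ψ, e₁, e₃]
  constructor
  · -- injective
    intro a b hab
    have hab' : (((a : G₁ × G₂ × G₃).1, (a : G₁ × G₂ × G₃).2.1) : G₁ × G₂)
        = (((b : G₁ × G₂ × G₃).1, (b : G₁ × G₂ × G₃).2.1) : G₁ × G₂) := hab
    obtain ⟨h1, h2⟩ := Prod.ext_iff.mp hab'
    dsimp only at h1 h2
    set x : G₁ × G₂ × G₃ := (a : G₁ × G₂ × G₃) * (b : G₁ × G₂ × G₃)⁻¹ with hx
    have hxmem : x ∈ ψ.ker ⊓ Subgroup.comap p₃ s₃.range :=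
      hle (Subgroup.mul_mem _ a.2 (Subgroup.inv_mem _ b.2))
    obtain ⟨hker, z, hz⟩ := hxmem
    have hc1 : x.1 = 1 := by simp [hx, Prod.fst_mul, Prod.fst_inv, h1]
    have hc2 : x.2.1 = 1 := by simp [hx, Prod.snd_mul, Prod.snd_inv, Prod.fst_mul, Prod.fst_inv, h2]
    have hker' : φ₃ x.2.2 = 1 := by
      have h := MonoidHom.mem_ker.mp hker
      have h2' : φ₁ x.1 * φ₂ x.2.1 * φ₃ x.2.2 = 1 := h
      rwa [hc1, hc2, map_one, map_one, one_mul, one_mul] at h2'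
    have hz1 : z = 1 := by
      have : φ₃ (s₃ z) = 1 := by rw [hz]; exact hker'
      rwa [e₃] at this
    have hc3 : x.2.2 = 1 := by
      have : s₃ z = x.2.2 := hz
      rw [← this, hz1, map_one]
    have hx1 : x = 1 := by
      ext
      · exact hc1
      · exact hc2
      · exact hc3
    have : (a : G₁ × G₂ × G₃) = (b : G₁ × G₂ × G₃) := by
      have := mul_inv_eq_one.mp hx1
      exact this
    exact Subtype.ext this
  · -- surjective
    rintro ⟨g₁, g₂⟩
    set z₁ := φ₁ g₁
    set z₂ := φ₂ g₂
    set k₁ : G₁ := g₁ * (s₁ z₁)⁻¹ with hk₁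
    set k₂ : G₂ := g₂ * (s₂ z₂)⁻¹ with hk₂
    have hk₁mem : k₁ ∈ φ₁.ker := by
      rw [MonoidHom.mem_ker, hk₁, map_mul, map_inv, e₁, mul_inv_cancel]
    have hk₂mem : k₂ ∈ φ₂.ker := by
      rw [MonoidHom.mem_ker, hk₂, map_mul, map_inv, e₂, mul_inv_cancel]
    have m1 : ((k₁, 1, 1) : G₁ × G₂ × G₃) ∈ Subgroup.closure (U₁ ∪ U₂ ∪ (T₁ ∪ T₂ ∪ T₃)) :=
      Subgroup.subset_closure (Or.inl (Or.inl (by rw [hU₁]; exact ⟨k₁, hk₁mem, rfl⟩)))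
    have m2 : ((1, k₂, 1) : G₁ × G₂ × G₃) ∈ Subgroup.closure (U₁ ∪ U₂ ∪ (T₁ ∪ T₂ ∪ T₃)) :=
      Subgroup.subset_closure (Or.inl (Or.inr (by rw [hU₂]; exact ⟨k₂, hk₂mem, rfl⟩)))
    have m3 : ((s₁ z₁, (s₂ z₁)⁻¹, 1) : G₁ × G₂ × G₃) ∈
        Subgroup.closure (U₁ ∪ U₂ ∪ (T₁ ∪ T₂ ∪ T₃)) :=
      Subgroup.subset_closure (Or.inr (Or.inl (Or.inl (by rw [hT₁]; exact ⟨z₁, rfl⟩))))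
    have m4 : ((1, s₂ (z₁ * z₂), (s₃ (z₁ * z₂))⁻¹) : G₁ × G₂ × G₃) ∈
        Subgroup.closure (U₁ ∪ U₂ ∪ (T₁ ∪ T₂ ∪ T₃)) :=
      Subgroup.subset_closure (Or.inr (Or.inl (Or.inr (by rw [hT₂]; exact ⟨z₁ * z₂, rfl⟩))))
    refine ⟨⟨_, Subgroup.mul_mem _ (Subgroup.mul_mem _ (Subgroup.mul_mem _ m1 m2) m3) m4⟩, ?_⟩
    simp only [Prod.fst_mul, Prod.snd_mul, Prod.mk.injEq]
    constructor
    · simp [hk₁]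
    · rw [hk₂, map_mul]
      group
end

section
/- Let f : ℕ → ℝ_{>0} be non-decreasing with f(n) ≥ n² for all n, and suppose f ≍ g for some g : ℕ → ℝ_{>0} with g(n)/n superadditive. Let \overline{f'} be the superadditive closure of f'(n) = f(n)/n and set f̂(n) := n · \overline{f'}(n). Then f̂ ≍ g and f̂(n) ≥ f(n) for all n ≥ 1. -/
/-- A function `h : ℕ → ℝ` is superadditive if `h (n + m) ≥ h n + h m` for `n, m ≥ 1`. -/
def IsSuperadditive (h : ℕ → ℝ) : Prop :=
  ∀ n m : ℕ, 1 ≤ n → 1 ≤ m → h n + h m ≤ h (n + m)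

/-- `hbar` is the superadditive closure of `h`: the smallest superadditive function
pointwise `≥ h` (on `n ≥ 1`). -/
def IsSuperadditiveClosure (h hbar : ℕ → ℝ) : Prop :=
  IsSuperadditive hbar ∧ (∀ n : ℕ, 1 ≤ n → h n ≤ hbar n) ∧
    ∀ g : ℕ → ℝ, IsSuperadditive g → (∀ n : ℕ, 1 ≤ n → h n ≤ g n) →
      ∀ n : ℕ, 1 ≤ n → hbar n ≤ g n

/-- `u ≼ v`: there is `C > 0` with `u n ≤ C * v (C*n + C) + C*n + C` for all `n`. -/
def Dominates (u v : ℕ → ℝ) : Prop :=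
  ∃ C : ℕ, 0 < C ∧ ∀ n : ℕ, u n ≤ C * v (C * n + C) + C * n + C

/-- `u ≍ v`: asymptotic equivalence. -/
def AsympEquiv (u v : ℕ → ℝ) : Prop :=
  Dominates u v ∧ Dominates v u

/-- A positive function whose `g n / n` is superadditive is itself superadditive on `≥ 1`. -/
lemma aux_g_superadd (g : ℕ → ℝ) (hgpos : ∀ n : ℕ, 1 ≤ n → 0 < g n)
    (hg' : IsSuperadditive (fun n => g n / n)) :
    ∀ n m : ℕ, 1 ≤ n → 1 ≤ m → g n + g m ≤ g (n + m) := by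
  intro n m hn hm
  have h := hg' n m hn hm
  simp only at h
  have hn0 : (0:ℝ) < n := by exact_mod_cast hn
  have hm0 : (0:ℝ) < m := by exact_mod_cast hm
  have hnm0 : (0:ℝ) < (n:ℝ) + m := by linarith
  have hcast : ((n + m : ℕ) : ℝ) = (n:ℝ) + m := by push_cast; ring
  rw [hcast] at h
  have h' := mul_le_mul_of_nonneg_left h (le_of_lt hnm0)
  have e0 : ((n:ℝ) + m) * (g (n + m) / ((n:ℝ) + m)) = g (n + m) := by
    field_simp
  rw [e0] at h'
  have hgn : 0 < g n := hgpos n hn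
  have hgm : 0 < g m := hgpos m hm
  have e1 : ((n:ℝ) + m) * (g n / n + g m / m)
      = g n + g m + ((m:ℝ) * (g n / n) + (n:ℝ) * (g m / m)) := by
    field_simp; ring
  rw [e1] at h'
  have p1 : 0 ≤ (m:ℝ) * (g n / n) := by positivity
  have p2 : 0 ≤ (n:ℝ) * (g m / m) := by positivity
  linarith

lemma aux_g_mono (g : ℕ → ℝ) (hgpos : ∀ n : ℕ, 1 ≤ n → 0 < g n)
    (hg' : IsSuperadditive (fun n => g n / n)) :
    ∀ a b : ℕ, 1 ≤ a → a ≤ b → g a ≤ g b := by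
  intro a b ha hab
  rcases Nat.eq_or_lt_of_le hab with h | h
  · rw [h]
  · have hba : b = a + (b - a) := by omega
    have := aux_g_superadd g hgpos hg' a (b - a) ha (by omega)
    have hpos := hgpos (b - a) (by omega)
    rw [← hba] at this
    linarith

lemma aux_g_mul (g : ℕ → ℝ) (hgpos : ∀ n : ℕ, 1 ≤ n → 0 < g n)
    (hg' : IsSuperadditive (fun n => g n / n)) :
    ∀ k m : ℕ, 1 ≤ k → 1 ≤ m → (k : ℝ) * g m ≤ g (k * m) := by
  intro k
  induction k with
  | zero => intro m hk; omega
  | succ k ih =>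
    intro m _ hm
    rcases Nat.eq_zero_or_pos k with hk0 | hk1
    · subst hk0; simp
    · have h1 := ih m hk1 hm
      have h2 := aux_g_superadd g hgpos hg' (k * m) m
        (Nat.one_le_iff_ne_zero.mpr (Nat.mul_ne_zero (by omega) (by omega))) hm
      have : (k + 1) * m = k * m + m := by ring
      rw [this]
      push_cast
      linarith

/-- If `f` is non-decreasing, positive, `f n ≥ n²`, and `f ≍ g` for some positive `g`
with `g n / n` superadditive, then `f̂ n := n * \overline{f'} n` (with `\overline{f'}`
the superadditive closure of `f n / n`) satisfies `f̂ ≍ g` and `f̂ n ≥ f n` for `n ≥ 1`. -/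
theorem nice_representative_of_equiv (f g f'bar : ℕ → ℝ)
    (hfpos : ∀ n : ℕ, 1 ≤ n → 0 < f n)
    (hfmono : Monotone f)
    (hfquad : ∀ n : ℕ, (n : ℝ) ^ 2 ≤ f n)
    (hgpos : ∀ n : ℕ, 1 ≤ n → 0 < g n)
    (hg' : IsSuperadditive (fun n => g n / n))
    (hfg : AsympEquiv f g)
    (hclos : IsSuperadditiveClosure (fun n => f n / n) f'bar) :
    AsympEquiv (fun n => n * f'bar n) g ∧ ∀ n : ℕ, 1 ≤ n → f n ≤ n * f'bar n := by
  obtain ⟨⟨C, hC, hCub⟩, ⟨D, hD, hDub⟩⟩ := hfg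
  obtain ⟨hsup, hle, hmin⟩ := hclos
  -- f n ≤ n * f'bar n for n ≥ 1
  have hfle : ∀ n : ℕ, 1 ≤ n → f n ≤ n * f'bar n := by
    intro n hn
    have hn0 : (0:ℝ) < n := by exact_mod_cast hn
    have := hle n hn
    simp only at this
    rw [div_le_iff₀ hn0] at this
    linarith [this]
  refine ⟨⟨?_, ?_⟩, hfle⟩
  · -- Dominates (n * f'bar n) g
    set K := 2 * C ^ 2 with hK
    have hK1 : 1 ≤ K := by rw [hK]; nlinarith
    have hKn1 : ∀ n : ℕ, 1 ≤ n → 1 ≤ K * n := by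
      intro n hn
      exact Nat.one_le_iff_ne_zero.mpr (Nat.mul_ne_zero (by omega) (by omega))
    -- the comparison function G
    set G : ℕ → ℝ := fun n => (K : ℝ) * (g (K * n) / (K * n : ℕ)) + (K : ℝ) * n with hG
    have hGsuper : IsSuperadditive G := by
      intro n m hn hm
      have h := hg' (K * n) (K * m) (hKn1 n hn) (hKn1 m hm)
      simp only at h
      have e : K * (n + m) = K * n + K * m := by ring
      simp only [hG, e]
      have hKr : (0:ℝ) ≤ K := by positivity
      have h2 := mul_le_mul_of_nonneg_left h hKr
      push_cast at h2 ⊢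
      linarith
    -- key bound : f n ≤ g (K * n) + K * n ^ 2 for n ≥ 1
    have hkey : ∀ n : ℕ, 1 ≤ n → f n ≤ g (K * n) + (K : ℝ) * n ^ 2 := by
      intro n hn
      have h1 := hCub n
      have h2 : g (C * n + C) ≤ g (2 * C * n) :=
        aux_g_mono g hgpos hg' _ _ (by omega) (by nlinarith)
      have h3 : (C : ℝ) * g (2 * C * n) ≤ g (C * (2 * C * n)) :=
        aux_g_mul g hgpos hg' C (2 * C * n) hC
          (Nat.one_le_iff_ne_zero.mpr (by simp; omega))
      have e : C * (2 * C * n) = K * n := by rw [hK]; ring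
      rw [e] at h3
      have hC1 : (1:ℝ) ≤ C := by exact_mod_cast hC
      have hn1 : (1:ℝ) ≤ n := by exact_mod_cast hn
      have hKr : (K:ℝ) = 2 * (C:ℝ) ^ 2 := by rw [hK]; push_cast; ring
      have hgpos2 : 0 < g (2 * C * n) := hgpos _ (Nat.one_le_iff_ne_zero.mpr (by simp; omega))
      have s1 : (C:ℝ) * g (C * n + C) ≤ (C:ℝ) * g (2 * C * n) :=
        mul_le_mul_of_nonneg_left h2 (by positivity)
      have x1 : (1:ℝ) ≤ (C:ℝ) * n := by nlinarith
      have t1 : (C:ℝ) * n ≤ ((C:ℝ) * n) ^ 2 := by nlinarith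
      have t3 : (C:ℝ) ≤ (C:ℝ) * n := by nlinarith
      have s2 : (C:ℝ) * n + C ≤ (K:ℝ) * n ^ 2 := by
        rw [hKr]
        have e2 : 2 * (C:ℝ) ^ 2 * n ^ 2 = 2 * ((C:ℝ) * n) ^ 2 := by ring
        rw [e2]
        linarith
      linarith
    -- f n / n ≤ G n for n ≥ 1
    have hGmul : ∀ n : ℕ, 1 ≤ n → (n:ℝ) * G n = g (K * n) + (K : ℝ) * n ^ 2 := by
      intro n hn
      have hKn0 : (0:ℝ) < ((K * n : ℕ) : ℝ) := by
        exact_mod_cast Nat.pos_of_ne_zero (Nat.mul_ne_zero (by omega) (by omega))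
      simp only [hG]
      field_simp
      push_cast
      ring
    have hGge : ∀ n : ℕ, 1 ≤ n → f n / n ≤ G n := by
      intro n hn
      have hn0 : (0:ℝ) < n := by exact_mod_cast hn
      rw [div_le_iff₀ hn0]
      calc f n ≤ g (K * n) + (K : ℝ) * n ^ 2 := hkey n hn
      _ = (n:ℝ) * G n := (hGmul n hn).symm
      _ = G n * n := by ring
    have hbarG : ∀ n : ℕ, 1 ≤ n → f'bar n ≤ G n := hmin G hGsuper hGge
    -- n * f'bar n ≤ g (K*n) + K * n^2 for n ≥ 1
    have hmain : ∀ n : ℕ, 1 ≤ n → (n : ℝ) * f'bar n ≤ g (K * n) + (K : ℝ) * n ^ 2 := by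
      intro n hn
      have hn0 : (0:ℝ) ≤ n := by positivity
      calc (n:ℝ) * f'bar n ≤ (n:ℝ) * G n := mul_le_mul_of_nonneg_left (hbarG n hn) hn0
      _ = g (K * n) + (K : ℝ) * n ^ 2 := hGmul n hn
    refine ⟨K * (C + 1), Nat.pos_of_ne_zero (Nat.mul_ne_zero (by omega) (by omega)), ?_⟩
    intro n
    have hCC₂ : C ≤ K * (C + 1) := by
      calc C ≤ 1 * (C + 1) := by omega
      _ ≤ K * (C + 1) := Nat.mul_le_mul_right _ hK1
    have hKC₂ : K ≤ K * (C + 1) := Nat.le_mul_of_pos_right K (by omega)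
    have hC₂pos : 1 ≤ K * (C + 1) := le_trans hK1 hKC₂
    rcases Nat.eq_zero_or_pos n with hn0 | hn
    · subst hn0
      simp only [Nat.cast_zero, zero_mul, mul_zero, Nat.mul_zero, Nat.zero_add, zero_add,
        add_zero]
      have hg := hgpos (K * (C + 1)) (by omega)
      have hc : (0:ℝ) ≤ ((K * (C + 1) : ℕ) : ℝ) := by positivity
      nlinarith
    · have h1 := hmain n hn
      have h2 := hfquad n
      have h3 := hCub n
      have h4 : g (K * n) ≤ g (K * (C + 1) * n + K * (C + 1)) := by
        apply aux_g_mono g hgpos hg' _ _ (hKn1 n hn)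
        calc K * n ≤ K * (C + 1) * n := Nat.mul_le_mul_right n hKC₂
        _ ≤ K * (C + 1) * n + K * (C + 1) := Nat.le_add_right _ _
      have h5 : g (C * n + C) ≤ g (K * (C + 1) * n + K * (C + 1)) := by
        apply aux_g_mono g hgpos hg' _ _ (by omega)
        exact Nat.add_le_add (Nat.mul_le_mul_right n hCC₂) hCC₂
      have h6 : 0 < g (K * (C + 1) * n + K * (C + 1)) := hgpos _ (by omega)
      have hC1 : (1:ℝ) ≤ C := by exact_mod_cast hC
      have hn1 : (1:ℝ) ≤ n := by exact_mod_cast hn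
      have hK1r : (1:ℝ) ≤ (K:ℕ) := by exact_mod_cast hK1
      have hC₂r : ((K * (C + 1) : ℕ) : ℝ) = (K:ℝ) * C + K := by push_cast; ring
      have s1 : (K:ℝ) * (n:ℝ) ^ 2 ≤ (K:ℝ) * f n :=
        mul_le_mul_of_nonneg_left h2 (by positivity)
      have s2 : (K:ℝ) * f n ≤ (K:ℝ) * ((C:ℝ) * g (C * n + C) + (C:ℝ) * n + C) :=
        mul_le_mul_of_nonneg_left h3 (by positivity)
      have s3 : (K:ℝ) * (C:ℝ) * g (C * n + C)
          ≤ (K:ℝ) * (C:ℝ) * g (K * (C + 1) * n + K * (C + 1)) :=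
        mul_le_mul_of_nonneg_left h5 (by positivity)
      have s4 : (1 + (K:ℝ) * C) * g (K * (C + 1) * n + K * (C + 1))
          ≤ ((K * (C + 1) : ℕ) : ℝ) * g (K * (C + 1) * n + K * (C + 1)) := by
        apply mul_le_mul_of_nonneg_right _ h6.le
        rw [hC₂r]; linarith
      have s5 : (K:ℝ) * (C:ℝ) * n ≤ ((K * (C + 1) : ℕ) : ℝ) * n := by
        apply mul_le_mul_of_nonneg_right _ (by positivity)
        rw [hC₂r]; linarith
      have s6 : (K:ℝ) * (C:ℝ) ≤ ((K * (C + 1) : ℕ) : ℝ) := by rw [hC₂r]; linarith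
      simp only
      linarith
  · -- Dominates g (n * f'bar n)
    refine ⟨D, hD, ?_⟩
    intro n
    have h1 := hDub n
    have h2 : f (D * n + D) ≤ ((D * n + D : ℕ) : ℝ) * f'bar (D * n + D) :=
      hfle (D * n + D) (by omega)
    have hD0 : (0:ℝ) ≤ D := by positivity
    simp only
    nlinarith
end
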